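/- arXiv:2603.09770 — 4 statements merged into one kernel-verified Lean document; each statement's English description precedes it below -/
import Mathlib

section
/- Let n and r be integers with 0 ≤ r < n/2 and n ≥ 3. The number of partitions of an n-element set into exactly n − r nonempty parts is at most C(n, 2r) · (2r)^{2r}, which in turn is at most (e·n)^{2r}. -/
attribute [local instance] Classical.propDecidable

namespace Stmt5Aux

variable {n : ℕ}

/-- The block of `P` containing `v` (junk `{v}` if not well defined). -/
noncomputable def blk (P : Finset (Finset (Fin n))) (v : Fin n) : Finset (Fin n) :=
  if h : ∃! W, W ∈ P ∧ v ∈ W then h.choose else {v}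

lemma mem_blk (P : Finset (Finset (Fin n))) (v : Fin n) : v ∈ blk P v := by
  unfold blk
  split
  next h => exact h.choose_spec.1.2
  next => exact Finset.mem_singleton_self v

lemma blk_mem {P : Finset (Finset (Fin n))} {v : Fin n}
    (h : ∃! W, W ∈ P ∧ v ∈ W) : blk P v ∈ P := by
  unfold blk; rw [dif_pos h]; exact h.choose_spec.1.1

lemma blk_eq {P : Finset (Finset (Fin n))} {v : Fin n}
    (h : ∃! W, W ∈ P ∧ v ∈ W) {W : Finset (Fin n)} (hW : W ∈ P) (hv : v ∈ W) :
    blk P v = W := by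
  unfold blk; rw [dif_pos h]; exact (h.choose_spec.2 W ⟨hW, hv⟩).symm

/-- The condition being counted. -/
def Good (r : ℕ) (P : Finset (Finset (Fin n))) : Prop :=
  (∀ v : Fin n, ∃! W, W ∈ P ∧ v ∈ W) ∧ (∀ W ∈ P, W.Nonempty) ∧ P.card = n - r

lemma blk_blk {P : Finset (Finset (Fin n))}
    (h1 : ∀ v : Fin n, ∃! W, W ∈ P ∧ v ∈ W) {v w : Fin n} (hw : w ∈ blk P v) :
    blk P w = blk P v :=
  blk_eq (h1 w) (blk_mem (h1 v)) hw

lemma min'_congr {α : Type*} [LinearOrder α] {s t : Finset α} (h : s = t)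
    (hs : s.Nonempty) (ht : t.Nonempty) : s.min' hs = t.min' ht := by subst h; rfl

lemma biUnion_eq {r : ℕ} {P : Finset (Finset (Fin n))} (hG : Good r P) :
    P.biUnion id = Finset.univ := by
  ext v
  simp only [Finset.mem_biUnion, id, Finset.mem_univ, iff_true]
  exact ⟨blk P v, blk_mem (hG.1 v), mem_blk P v⟩

lemma pdisj {r : ℕ} {P : Finset (Finset (Fin n))} (hG : Good r P) :
    ∀ W₁ ∈ P, ∀ W₂ ∈ P, W₁ ≠ W₂ → Disjoint W₁ W₂ := by
  intro W₁ h₁ W₂ h₂ hne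
  refine Finset.disjoint_left.2 fun v hv₁ hv₂ => hne ?_
  rw [← blk_eq (hG.1 v) h₁ hv₁, blk_eq (hG.1 v) h₂ hv₂]

lemma sum_card {r : ℕ} {P : Finset (Finset (Fin n))} (hG : Good r P) :
    ∑ W ∈ P, W.card = n := by
  have h := Finset.card_biUnion (t := id) (pdisj hG)
  rw [biUnion_eq hG, Finset.card_univ, Fintype.card_fin] at h
  simpa using h.symm

/-- The set of elements lying in non-singleton blocks. -/
def Tset (P : Finset (Finset (Fin n))) : Finset (Fin n) :=
  (P.filter fun W => 2 ≤ W.card).biUnion id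

lemma T_card {r : ℕ} {P : Finset (Finset (Fin n))} (hG : Good r P)
    (hr : 2 * r < n) : (Tset P).card ≤ 2 * r := by
  set Q := P.filter fun W => 2 ≤ W.card with hQ
  have hTc : (Tset P).card = ∑ W ∈ Q, W.card := by
    refine Finset.card_biUnion fun W₁ h₁ W₂ h₂ hne =>
      pdisj hG W₁ (Finset.filter_subset _ _ h₁) W₂ (Finset.filter_subset _ _ h₂) hne
  have h2 : Q.card * 2 ≤ ∑ W ∈ Q, W.card := by
    have := Finset.card_nsmul_le_sum Q (fun W => W.card) 2
      (fun W hW => (Finset.mem_filter.1 hW).2)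
    simpa [smul_eq_mul] using this
  have hsplit : ∑ W ∈ Q, W.card + ∑ W ∈ P.filter (fun W => ¬ 2 ≤ W.card), W.card
      = ∑ W ∈ P, W.card := Finset.sum_filter_add_sum_filter_not P _ _
  have hones : ∑ W ∈ P.filter (fun W => ¬ 2 ≤ W.card), W.card
      = (P.filter (fun W => ¬ 2 ≤ W.card)).card := by
    rw [Finset.card_eq_sum_ones]
    refine Finset.sum_congr rfl fun W hW => ?_
    obtain ⟨hWP, hWs⟩ := Finset.mem_filter.1 hW
    have h1 : 1 ≤ W.card := Finset.card_pos.2 (hG.2.1 W hWP)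
    omega
  have hcards : Q.card + (P.filter (fun W => ¬ 2 ≤ W.card)).card = P.card :=
    Finset.card_filter_add_card_filter_not _
  have hsum := sum_card hG
  have hPc := hG.2.2
  omega

/-- A `2r`-element superset of `Tset P`. -/
noncomputable def Sp (r : ℕ) (P : Finset (Finset (Fin n))) : Finset (Fin n) :=
  if h : ∃ u : Finset (Fin n), Tset P ⊆ u ∧ u.card = 2 * r then h.choose else ∅

lemma Sp_spec {r : ℕ} {P : Finset (Finset (Fin n))} (hG : Good r P)
    (hr : 2 * r < n) : Tset P ⊆ Sp r P ∧ (Sp r P).card = 2 * r := by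
  have hex : ∃ u : Finset (Fin n), Tset P ⊆ u ∧ u.card = 2 * r := by
    obtain ⟨u, hu1, _, hu3⟩ := Finset.exists_subsuperset_card_eq
      (Finset.subset_univ (Tset P)) (T_card hG hr)
      (by simp only [Finset.card_univ, Fintype.card_fin]; omega)
    exact ⟨u, hu1, hu3⟩
  unfold Sp; rw [dif_pos hex]; exact hex.choose_spec

lemma blk_small {P : Finset (Finset (Fin n))} {v : Fin n}
    (h2 : ¬ 2 ≤ (blk P v).card) : blk P v = {v} := by
  have h1 : 1 ≤ (blk P v).card := Finset.card_pos.2 ⟨v, mem_blk P v⟩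
  have hc : (blk P v).card = 1 := by omega
  obtain ⟨a, ha⟩ := Finset.card_eq_one.1 hc
  have := mem_blk P v
  rw [ha] at this ⊢
  rw [Finset.mem_singleton.1 this]

lemma blk_singleton {r : ℕ} {P : Finset (Finset (Fin n))} (hG : Good r P)
    (hr : 2 * r < n) {v : Fin n} (hv : v ∉ Sp r P) : blk P v = {v} := by
  by_cases h2 : 2 ≤ (blk P v).card
  · exfalso
    refine hv ((Sp_spec hG hr).1 ?_)
    exact Finset.mem_biUnion.2 ⟨blk P v,
      Finset.mem_filter.2 ⟨blk_mem (hG.1 v), h2⟩, mem_blk P v⟩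
  · exact blk_small h2

lemma blk_subset {r : ℕ} {P : Finset (Finset (Fin n))} (hG : Good r P)
    (hr : 2 * r < n) {v : Fin n} (hv : v ∈ Sp r P) : blk P v ⊆ Sp r P := by
  by_cases h2 : 2 ≤ (blk P v).card
  · refine subset_trans ?_ (Sp_spec hG hr).1
    exact Finset.subset_biUnion_of_mem id
      (Finset.mem_filter.2 ⟨blk_mem (hG.1 v), h2⟩)
  · rw [blk_small h2]
    simpa using hv

/-- The encoding function. -/
noncomputable def gp (r : ℕ) (P : Finset (Finset (Fin n))) :
    Fin (2 * r) → Fin (2 * r) :=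
  if h : (Sp r P).card = 2 * r then
    fun i =>
      ((Sp r P).orderIsoOfFin h).symm
        ⟨(blk P (((Sp r P).orderIsoOfFin h i : Fin n)) ∩ Sp r P).min'
            ⟨((Sp r P).orderIsoOfFin h i : Fin n), Finset.mem_inter.2
              ⟨mem_blk _ _, ((Sp r P).orderIsoOfFin h i).2⟩⟩,
         Finset.mem_of_mem_inter_right (Finset.min'_mem _ _)⟩
  else id

lemma gp_spec {r : ℕ} {P : Finset (Finset (Fin n))} (hG : Good r P)
    (hr : 2 * r < n) (hc : (Sp r P).card = 2 * r) (i : Fin (2 * r)) :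
    ((Sp r P).orderIsoOfFin hc (gp r P i) : Fin n)
      = (blk P ((Sp r P).orderIsoOfFin hc i : Fin n)).min'
          ⟨_, mem_blk P ((Sp r P).orderIsoOfFin hc i : Fin n)⟩ := by
  have hsub := blk_subset hG hr ((Sp r P).orderIsoOfFin hc i).2
  unfold gp
  rw [dif_pos hc]
  simp only [OrderIso.apply_symm_apply]
  exact min'_congr (Finset.inter_eq_left.2 hsub) _ _

lemma g_iff {r : ℕ} {P : Finset (Finset (Fin n))} (hG : Good r P)
    (hr : 2 * r < n) (hc : (Sp r P).card = 2 * r) (i j : Fin (2 * r)) :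
    gp r P i = gp r P j ↔
      blk P ((Sp r P).orderIsoOfFin hc i : Fin n)
        = blk P ((Sp r P).orderIsoOfFin hc j : Fin n) := by
  constructor
  · intro h
    have hco := congrArg (fun x => ((Sp r P).orderIsoOfFin hc x : Fin n)) h
    rw [gp_spec hG hr hc i, gp_spec hG hr hc j] at hco
    have hmi : (blk P ((Sp r P).orderIsoOfFin hc i : Fin n)).min'
        ⟨_, mem_blk P _⟩ ∈ blk P ((Sp r P).orderIsoOfFin hc i : Fin n) :=
      Finset.min'_mem _ _
    have hmj : (blk P ((Sp r P).orderIsoOfFin hc j : Fin n)).min'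
        ⟨_, mem_blk P _⟩ ∈ blk P ((Sp r P).orderIsoOfFin hc j : Fin n) :=
      Finset.min'_mem _ _
    rw [hco] at hmi
    calc blk P ((Sp r P).orderIsoOfFin hc i : Fin n)
        = blk P ((blk P ((Sp r P).orderIsoOfFin hc j : Fin n)).min'
            ⟨_, mem_blk P _⟩) := (blk_blk hG.1 hmi).symm
      _ = blk P ((Sp r P).orderIsoOfFin hc j : Fin n) := blk_blk hG.1 hmj
  · intro h
    apply ((Sp r P).orderIsoOfFin hc).injective
    apply Subtype.ext
    rw [gp_spec hG hr hc i, gp_spec hG hr hc j]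
    exact min'_congr h _ _

lemma class_eq {r : ℕ} {P : Finset (Finset (Fin n))} (hG : Good r P)
    (hr : 2 * r < n) (hc : (Sp r P).card = 2 * r) (i : Fin (2 * r)) :
    ((Finset.univ.filter fun j => gp r P j = gp r P i).image
        fun j => ((Sp r P).orderIsoOfFin hc j : Fin n))
      = blk P ((Sp r P).orderIsoOfFin hc i : Fin n) := by
  ext y
  simp only [Finset.mem_image, Finset.mem_filter, Finset.mem_univ, true_and]
  constructor
  · rintro ⟨j, hj, rfl⟩
    have hb := (g_iff hG hr hc j i).1 hj
    rw [← hb]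
    exact mem_blk P _
  · intro hy
    have hyS : y ∈ Sp r P :=
      blk_subset hG hr ((Sp r P).orderIsoOfFin hc i).2 hy
    refine ⟨((Sp r P).orderIsoOfFin hc).symm ⟨y, hyS⟩, ?_, by simp⟩
    apply (g_iff hG hr hc _ i).2
    have hey : ((Sp r P).orderIsoOfFin hc
        (((Sp r P).orderIsoOfFin hc).symm ⟨y, hyS⟩) : Fin n) = y := by simp
    rw [hey]
    exact blk_blk hG.1 hy

/-- Decoding: recovers the partition from its code. -/
noncomputable def decode (r : ℕ) (S : Finset (Fin n))
    (g : Fin (2 * r) → Fin (2 * r)) : Finset (Finset (Fin n)) :=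
  if h : S.card = 2 * r then
    ((Finset.univ \ S).image fun x => ({x} : Finset (Fin n))) ∪
      (Finset.univ.image fun i : Fin (2 * r) =>
        (Finset.univ.filter fun j => g j = g i).image
          fun j => (S.orderIsoOfFin h j : Fin n))
  else ∅

lemma recon {r : ℕ} {P : Finset (Finset (Fin n))} (hG : Good r P)
    (hr : 2 * r < n) : decode r (Sp r P) (gp r P) = P := by
  obtain ⟨hTS, hc⟩ := Sp_spec hG hr
  unfold decode
  rw [dif_pos hc]
  ext W
  simp only [Finset.mem_union, Finset.mem_image, Finset.mem_sdiff,
    Finset.mem_univ, true_and]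
  constructor
  · rintro (⟨x, hx, rfl⟩ | ⟨i, rfl⟩)
    · rw [← blk_singleton hG hr hx]
      exact blk_mem (hG.1 x)
    · rw [class_eq hG hr hc i]
      exact blk_mem (hG.1 _)
  · intro hW
    obtain ⟨v, hv⟩ := hG.2.1 W hW
    have hWv : blk P v = W := blk_eq (hG.1 v) hW hv
    by_cases hvS : v ∈ Sp r P
    · right
      refine ⟨((Sp r P).orderIsoOfFin hc).symm ⟨v, hvS⟩, ?_⟩
      rw [class_eq hG hr hc]
      have hev : ((Sp r P).orderIsoOfFin hc
          (((Sp r P).orderIsoOfFin hc).symm ⟨v, hvS⟩) : Fin n) = v := by simp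
      rw [hev, hWv]
    · left
      exact ⟨v, hvS, by rw [← hWv, blk_singleton hG hr hvS]⟩

end Stmt5Aux

open Stmt5Aux in
theorem stmt_5 (n r : ℕ) (hn : 3 ≤ n) (hr : 2 * r < n) :
    (((Finset.univ : Finset (Finset (Finset (Fin n)))).filter
        (fun P => (∀ v : Fin n, ∃! W, W ∈ P ∧ v ∈ W) ∧ (∀ W ∈ P, W.Nonempty) ∧
          P.card = n - r)).card
      ≤ n.choose (2 * r) * (2 * r) ^ (2 * r)) ∧
    ((n.choose (2 * r) * (2 * r) ^ (2 * r) : ℝ) ≤ (Real.exp 1 * n) ^ (2 * r)) := by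
  constructor
  · -- combinatorial bound
    have hle := Finset.card_le_card_of_injOn
      (f := fun P : Finset (Finset (Fin n)) => (Sp r P, gp r P))
      (s := (Finset.univ : Finset (Finset (Finset (Fin n)))).filter
        (fun P => (∀ v : Fin n, ∃! W, W ∈ P ∧ v ∈ W) ∧ (∀ W ∈ P, W.Nonempty) ∧
          P.card = n - r))
      (t := Finset.powersetCard (2 * r) (Finset.univ : Finset (Fin n)) ×ˢ
        (Finset.univ : Finset (Fin (2 * r) → Fin (2 * r))))
      (by
        intro P hP
        have hG : Good r P := (Finset.mem_filter.1 hP).2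
        exact Finset.mem_product.2 ⟨Finset.mem_powersetCard.2
          ⟨Finset.subset_univ _, (Sp_spec hG hr).2⟩, Finset.mem_univ _⟩)
      (by
        intro P₁ h₁ P₂ h₂ heq
        have hG₁ : Good r P₁ := (Finset.mem_filter.1 (Finset.mem_coe.1 h₁)).2
        have hG₂ : Good r P₂ := (Finset.mem_filter.1 (Finset.mem_coe.1 h₂)).2
        have hS : Sp r P₁ = Sp r P₂ := congrArg Prod.fst heq
        have hg : gp r P₁ = gp r P₂ := congrArg Prod.snd heq
        calc P₁ = decode r (Sp r P₁) (gp r P₁) := (recon hG₁ hr).symm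
          _ = decode r (Sp r P₂) (gp r P₂) := by rw [hS, hg]
          _ = P₂ := recon hG₂ hr)
    refine hle.trans (le_of_eq ?_)
    rw [Finset.card_product, Finset.card_powersetCard, Finset.card_univ,
      Finset.card_univ, Fintype.card_fin]
    simp [Fintype.card_fun]
  · -- analytic bound
    set k := 2 * r with hk
    have h1 : (n.choose k : ℝ) ≤ (n : ℝ) ^ k / (Nat.factorial k : ℝ) :=
      Nat.choose_le_pow_div k n
    have h2 : ((k : ℝ)) ^ k / (Nat.factorial k : ℝ) ≤ Real.exp k :=
      Real.pow_div_factorial_le_exp (x := (k : ℝ)) (Nat.cast_nonneg k) k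
    have hkpow : (0 : ℝ) ≤ (k : ℝ) ^ k := by positivity
    have hnpow : (0 : ℝ) ≤ (n : ℝ) ^ k := by positivity
    have hkr : ((k : ℝ)) = 2 * (r : ℝ) := by rw [hk]; push_cast; ring
    rw [← hkr]
    calc (n.choose k : ℝ) * (k : ℝ) ^ k
        ≤ ((n : ℝ) ^ k / (Nat.factorial k : ℝ)) * (k : ℝ) ^ k :=
          mul_le_mul_of_nonneg_right h1 hkpow
      _ = (n : ℝ) ^ k * ((k : ℝ) ^ k / (Nat.factorial k : ℝ)) := by ring
      _ ≤ (n : ℝ) ^ k * Real.exp k := mul_le_mul_of_nonneg_left h2 hnpow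
      _ = (Real.exp 1 * n) ^ k := by
          rw [mul_pow, ← Real.exp_nat_mul, mul_one, mul_comm]
end

section
/- Let n ≥ 2 and 2 ≤ k ≤ n, and let V_1, ..., V_k be a partition of the vertex set of K_n into k nonempty parts. Then the number of edges of K_n crossing the partition is at least C(n,2) − C(n−k+1, 2). -/
/-!
The non-crossing edges are the edges inside the parts, `∑ C(|W|, 2)` of them, so it suffices to
bound this sum. Writing the part sizes as `aᵢ + 1`, the inequality
`C(a + 1, 2) + C(b + 1, 2) ≤ C(a + b + 1, 2)` gives by induction
`∑ C(aᵢ + 1, 2) ≤ C(∑ aᵢ + 1, 2) = C(n - k + 1, 2)`.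
-/

attribute [local instance] Classical.propDecidable

open Finset

theorem Nat.succ_choose_two_add_succ_choose_two_le (a b : ℕ) :
    (a + 1).choose 2 + (b + 1).choose 2 ≤ (a + b + 1).choose 2 := by
  induction b with
  | zero => simp
  | succ b ih =>
    have choose_two_succ (m : ℕ) : (m + 1).choose 2 = m.choose 2 + m := by
      rw [Nat.choose_succ_succ', Nat.choose_one_right, add_comm]
    rw [show a + (b + 1) + 1 = a + b + 1 + 1 by omega, choose_two_succ (a + b + 1),
      choose_two_succ (b + 1)]
    omega

theorem Finset.sum_succ_choose_two_le {ι : Type*} (s : Finset ι) (g : ι → ℕ) :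
    ∑ i ∈ s, (g i + 1).choose 2 ≤ (∑ i ∈ s, g i + 1).choose 2 := by
  induction s using Finset.cons_induction with
  | empty => simp
  | cons a s _ ih =>
    rw [sum_cons, sum_cons, add_assoc]
    exact (Nat.add_le_add_left ih _).trans (Nat.succ_choose_two_add_succ_choose_two_le _ _)

section

variable {α : Type*}

theorem Finset.card_sym2_filter_not_isDiag (s : Finset α) :
    #{e ∈ s.sym2 | ¬e.IsDiag} = (#s).choose 2 := by
  rw [sym2_eq_image, Sym2.filter_image_mk_not_isDiag, Sym2.card_image_offDiag]

theorem Finset.disjoint_sym2 {s t : Finset α} (h : Disjoint s t) : Disjoint s.sym2 t.sym2 := by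
  rw [disjoint_left]
  rintro ⟨x, y⟩ hs ht
  exact disjoint_left.1 h (mem_sym2_iff.1 hs x (Sym2.mem_mk_left x y))
    (mem_sym2_iff.1 ht x (Sym2.mem_mk_left x y))

theorem pairwiseDisjoint_of_existsUnique_mem {P : Finset (Finset α)}
    (hP : ∀ v, ∃! W, W ∈ P ∧ v ∈ W) : (P : Set (Finset α)).PairwiseDisjoint id := by
  intro W hW W' hW' hne
  rw [Function.onFun, id, id, disjoint_left]
  intro v hvW hvW'
  exact hne ((hP v).unique ⟨hW, hvW⟩ ⟨hW', hvW'⟩)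

variable [Fintype α]

theorem sum_card_eq_card_of_existsUnique_mem {P : Finset (Finset α)}
    (hP : ∀ v, ∃! W, W ∈ P ∧ v ∈ W) : ∑ W ∈ P, #W = Fintype.card α := by
  have hcover : P.biUnion id = univ :=
    eq_univ_of_forall fun v => mem_biUnion.2 (hP v).exists
  rw [← card_univ, ← hcover, card_biUnion (pairwiseDisjoint_of_existsUnique_mem hP)]
  rfl

theorem card_crossing_add_sum_choose_two {P : Finset (Finset α)}
    (hP : (P : Set (Finset α)).PairwiseDisjoint id) :
    #{e : Sym2 α | ¬e.IsDiag ∧ ∀ W ∈ P, ¬∀ v ∈ e, v ∈ W} + ∑ W ∈ P, (#W).choose 2 =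
      (Fintype.card α).choose 2 := by
  have hinside : ({e : Sym2 α | ¬e.IsDiag ∧ ¬∀ W ∈ P, ¬∀ v ∈ e, v ∈ W} : Finset (Sym2 α)) =
      P.biUnion fun W => {e ∈ W.sym2 | ¬e.IsDiag} := by
    ext e
    simp only [mem_filter, mem_univ, true_and, mem_biUnion, mem_sym2_iff]
    push Not
    exact ⟨fun ⟨hd, W, hW, he⟩ => ⟨W, hW, he, hd⟩, fun ⟨W, hW, he, hd⟩ => ⟨hd, W, hW, he⟩⟩
  have hinside_card : #{e : Sym2 α | ¬e.IsDiag ∧ ¬∀ W ∈ P, ¬∀ v ∈ e, v ∈ W} =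
      ∑ W ∈ P, (#W).choose 2 := by
    rw [hinside, card_biUnion fun W hW W' hW' hne =>
      disjoint_filter_filter (s := W.sym2) (t := W'.sym2) (disjoint_sym2 (hP hW hW' hne))]
    exact sum_congr rfl fun W _ => card_sym2_filter_not_isDiag W
  rw [← hinside_card, ← filter_filter, ← filter_filter,
    card_filter_add_card_filter_not (s := {e : Sym2 α | ¬e.IsDiag}), ← Sym2.card_subtype_not_diag,
    Fintype.card_subtype]

end

theorem stmt_6_general (n : ℕ) (P : Finset (Finset (Fin n)))
    (hpart : ∀ v : Fin n, ∃! W, W ∈ P ∧ v ∈ W)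
    (hne : ∀ W ∈ P, W.Nonempty) :
    n.choose 2 - (n - P.card + 1).choose 2 ≤
      ((Finset.univ : Finset (Sym2 (Fin n))).filter
        (fun e => ¬ e.IsDiag ∧ ∀ W ∈ P, ¬ (∀ v ∈ e, v ∈ W))).card := by
  have hcount := card_crossing_add_sum_choose_two (pairwiseDisjoint_of_existsUnique_mem hpart)
  have hsum : ∑ W ∈ P, (#W - 1) = n - #P := by
    rw [sum_tsub_distrib _ fun W hW => card_pos.2 (hne W hW), sum_const, smul_eq_mul, mul_one,
      sum_card_eq_card_of_existsUnique_mem hpart, Fintype.card_fin]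
  have hinside : ∑ W ∈ P, (#W).choose 2 ≤ (n - #P + 1).choose 2 := by
    have := sum_succ_choose_two_le P fun W => #W - 1
    rwa [hsum, sum_congr rfl fun W hW => by rw [Nat.sub_add_cancel (card_pos.2 (hne W hW))]]
      at this
  rw [Fintype.card_fin] at hcount
  convert Nat.sub_le_of_le_add (hcount.ge.trans (Nat.add_le_add_left hinside _))

theorem stmt_6 (n : ℕ) (hn : 2 ≤ n) (P : Finset (Finset (Fin n)))
    (hpart : ∀ v : Fin n, ∃! W, W ∈ P ∧ v ∈ W)
    (hne : ∀ W ∈ P, W.Nonempty)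
    (hk2 : 2 ≤ P.card) (hkn : P.card ≤ n) :
    n.choose 2 - (n - P.card + 1).choose 2 ≤
      ((Finset.univ : Finset (Sym2 (Fin n))).filter
        (fun e => ¬ e.IsDiag ∧ ∀ W ∈ P, ¬ (∀ v ∈ e, v ∈ W))).card :=
  stmt_6_general n P hpart hne
end

section
/- Let G = (V, E) be a finite multigraph on n vertices and c : E → [n−1] an edge coloring. Then G contains a spanning tree whose n−1 edges receive pairwise distinct colors if and only if for every k ∈ [n] and every partition of V into k nonempty classes, the edges of G joining two different classes use at least k−1 distinct colors. -/
/-!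
A rainbow spanning tree is a common basis of the graphic matroid, with rank function
`r A = |V| - (number of components of (V, A))`, and of the partition matroid of the colour
classes `A i`. By Rado's theorem it exists iff `|K| ≤ r (⋃ i ∈ K, A i)` for every set `K` of
colours. For the partition of `V` into the components of `⋃ i ∈ K, A i`, only colours outside
`K` cross, so the hypothesis gives exactly this inequality. Conversely, a spanning tree has at
least `k - 1` edges crossing any partition into `k` classes, and these carry distinct colours.

Rado's theorem holds for every submodular `ρ : Finset E → ℕ` with `ρ X ≤ |X|`: if some `A i`
has two elements `x ≠ y`, submodularity shows that deleting `x` or deleting `y` from `A i`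
preserves Rado's condition, and we induct on `∑ i, |A i|`.
-/

open Finset Function

section Rado

variable {ι E : Type*} [DecidableEq E] {ρ : Finset E → ℕ}

def RadoCondition (ρ : Finset E → ℕ) (A : ι → Finset E) : Prop :=
  ∀ K : Finset ι, #K ≤ ρ (K.biUnion A)

lemma RadoCondition.exists_transversal_of_card_le_one [Fintype ι] (hcard : ∀ X, ρ X ≤ #X)
    {A : ι → Finset E} (hA : RadoCondition ρ A) (hone : ∀ i, #(A i) ≤ 1) :
    ∃ f : ι → E, Injective f ∧ (∀ i, f i ∈ A i) ∧ Fintype.card ι ≤ ρ (univ.image f) := by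
  classical
  have hsingleton (i : ι) : ∃ x, A i = {x} := by
    refine card_eq_one.mp (le_antisymm (hone i) ?_)
    simpa using (hA {i}).trans (hcard _)
  choose f hf using hsingleton
  have himage : univ.biUnion A = univ.image f := by ext; simp [hf, eq_comm]
  refine ⟨f, fun i j hij => ?_, fun i => by simp [hf], by simpa [himage] using hA univ⟩
  by_contra hne
  have := (hA {i, j}).trans (hcard _)
  simp [hf, hij, card_pair hne] at this

lemma RadoCondition.update_erase_or [DecidableEq ι] (hmono : Monotone ρ)
    (hsub : ∀ X Y, ρ (X ∪ Y) + ρ (X ∩ Y) ≤ ρ X + ρ Y) {A : ι → Finset E}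
    (hA : RadoCondition ρ A) (i : ι) {x y : E} (hxy : x ≠ y) :
    RadoCondition ρ (update A i ((A i).erase x)) ∨
      RadoCondition ρ (update A i ((A i).erase y)) := by
  by_contra h
  simp only [RadoCondition, not_or, not_forall, not_le] at h
  obtain ⟨⟨K, hK⟩, ⟨L, hL⟩⟩ := h
  have mem_of_deficient {z : E} {K : Finset ι}
      (hK : ρ (K.biUnion (update A i ((A i).erase z))) < #K) : i ∈ K := by
    by_contra hi
    have : K.biUnion (update A i ((A i).erase z)) = K.biUnion A :=
      biUnion_congr rfl fun j hj => update_of_ne (ne_of_mem_of_not_mem hj hi) _ _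
    exact (hA K).not_gt (this ▸ hK)
  have hiK := mem_of_deficient hK
  have hiL := mem_of_deficient hL
  -- `K ∪ L` and `(K ∩ L).erase i` have as many elements as `K` and `L` together, less one,
  -- but their unions lie in the union (as `x ≠ y`) and the intersection of the two deficient unions.
  have hunion : (K ∪ L).biUnion A ⊆
      K.biUnion (update A i ((A i).erase x)) ∪ L.biUnion (update A i ((A i).erase y)) := by
    intro e he
    simp only [mem_union, mem_biUnion, update_apply] at he ⊢
    grind
  have hinter : ((K ∩ L).erase i).biUnion A ⊆
      K.biUnion (update A i ((A i).erase x)) ∩ L.biUnion (update A i ((A i).erase y)) := by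
    intro e he
    simp only [mem_inter, mem_erase, mem_biUnion, update_apply] at he ⊢
    grind
  have := (hA _).trans (hmono hunion)
  have := (hA _).trans (hmono hinter)
  have := hsub (K.biUnion (update A i ((A i).erase x))) (L.biUnion (update A i ((A i).erase y)))
  have := card_union_add_card_inter K L
  have := card_erase_add_one (mem_inter.mpr ⟨hiK, hiL⟩)
  omega

theorem RadoCondition.exists_transversal [Fintype ι] (hcard : ∀ X, ρ X ≤ #X)
    (hmono : Monotone ρ) (hsub : ∀ X Y, ρ (X ∪ Y) + ρ (X ∩ Y) ≤ ρ X + ρ Y)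
    {A : ι → Finset E} (hA : RadoCondition ρ A) :
    ∃ f : ι → E, Injective f ∧ (∀ i, f i ∈ A i) ∧ Fintype.card ι ≤ ρ (univ.image f) := by
  classical
  induction hN : ∑ i, #(A i) using Nat.strong_induction_on generalizing A with
  | _ N ih =>
  by_cases hone : ∀ i, #(A i) ≤ 1
  · exact hA.exists_transversal_of_card_le_one hcard hone
  obtain ⟨i, hi⟩ := not_forall.mp hone
  rw [not_le] at hi
  obtain ⟨x, hx, y, hy, hxy⟩ := one_lt_card.mp hi
  have shrink {z : E} (hz : z ∈ A i) (hAz : RadoCondition ρ (update A i ((A i).erase z))) :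
      ∃ f : ι → E, Injective f ∧ (∀ i, f i ∈ A i) ∧ Fintype.card ι ≤ ρ (univ.image f) := by
    have hle (j : ι) : update A i ((A i).erase z) j ⊆ A j := by
      rcases eq_or_ne j i with rfl | hj
      · simpa using erase_subset z (A j)
      · simp [hj]
    have hlt : ∑ j, #(update A i ((A i).erase z) j) < N :=
      hN ▸ sum_lt_sum (fun j _ => card_le_card (hle j))
        ⟨i, mem_univ i, by simpa using card_lt_card (erase_ssubset hz)⟩
    obtain ⟨f, hf, hfA, hfρ⟩ := ih _ hlt hAz rfl
    exact ⟨f, hf, fun j => hle j (hfA j), hfρ⟩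
  rcases hA.update_erase_or hmono hsub i hxy with h | h
  exacts [shrink hx h, shrink hy h]

end Rado

namespace SimpleGraph

variable {V : Type*} {G H : SimpleGraph V} {u v : V}

lemma Reachable.eq_of_forall_adj {β : Type*} {f : V → β} (hf : ∀ a b, G.Adj a b → f a = f b)
    {a b : V} (h : G.Reachable a b) : f a = f b := by
  obtain ⟨p⟩ := h
  induction p with
  | nil => rfl
  | cons hadj _ ih => exact (hf _ _ hadj).trans ih

lemma Reachable.of_sup_edge {a b : V} (h : (G ⊔ edge u v).Reachable a b) :
    G.Reachable a b ∨ (G.Reachable a u ∧ G.Reachable v b) ∨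
      (G.Reachable a v ∧ G.Reachable u b) := by
  obtain ⟨p⟩ := h
  induction p with
  | nil => exact .inl .rfl
  | @cons a x b hax _ ih =>
    rcases (sup_adj ..).mp hax with hG | he
    · have := hG.reachable
      grind [Reachable.trans]
    · obtain ⟨⟨rfl, rfl⟩ | ⟨rfl, rfl⟩, -⟩ := (edge_adj ..).mp he <;> grind [Reachable.refl]

lemma card_connectedComponent_bot : Nat.card (⊥ : SimpleGraph V).ConnectedComponent = Nat.card V :=
  (Nat.card_eq_of_bijective _ ⟨fun _ _ h => reachable_bot.mp (ConnectedComponent.exact h),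
    Quot.mk_surjective⟩).symm

lemma card_connectedComponent_sup_edge_of_reachable (h : G.Reachable u v) :
    Nat.card (G ⊔ edge u v).ConnectedComponent = Nat.card G.ConnectedComponent := by
  refine (Nat.card_eq_of_bijective _ ⟨fun x y hxy => ?_,
    ConnectedComponent.surjective_map_ofLE (le_sup_left : G ≤ G ⊔ edge u v)⟩).symm
  induction x using ConnectedComponent.ind
  induction y using ConnectedComponent.ind
  simp only [ConnectedComponent.map_mk, Hom.coe_ofLE, id, ConnectedComponent.eq] at hxy ⊢
  rcases hxy.of_sup_edge with h' | h' | h'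
  exacts [h', h'.1.trans (h.trans h'.2), h'.1.trans (h.symm.trans h'.2)]

lemma card_connectedComponent_eq_one_iff : Nat.card G.ConnectedComponent = 1 ↔ G.Connected := by
  refine ⟨fun h => ?_, fun h => Nat.card_eq_one_iff_unique.mpr
    ⟨h.preconnected.subsingleton_connectedComponent, h.nonempty.map G.connectedComponentMk⟩⟩
  obtain ⟨hsub, ⟨c⟩⟩ := Nat.card_eq_one_iff_unique.mp h
  obtain ⟨v, -⟩ := c.exists_rep
  exact (connected_iff G).mpr ⟨fun a b => ConnectedComponent.exact (Subsingleton.elim _ _), ⟨v⟩⟩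

section Finite

variable [Finite V]

lemma card_connectedComponent_le_card : Nat.card G.ConnectedComponent ≤ Nat.card V :=
  Nat.card_le_card_of_surjective _ Quot.mk_surjective

lemma card_connectedComponent_sup_edge_add_one (h : ¬G.Reachable u v) :
    Nat.card (G ⊔ edge u v).ConnectedComponent + 1 = Nat.card G.ConnectedComponent := by
  set φ := ConnectedComponent.map (Hom.ofLE (le_sup_left : G ≤ G ⊔ edge u v))
  set cu := G.connectedComponentMk u
  set cv := G.connectedComponentMk v
  have hφ (x y) (hxy : φ x = φ y) : x = y ∨ (x = cu ∧ y = cv) ∨ (x = cv ∧ y = cu) := by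
    induction x using ConnectedComponent.ind
    induction y using ConnectedComponent.ind
    simp only [φ, cu, cv, ConnectedComponent.map_mk, Hom.coe_ofLE, id,
      ConnectedComponent.eq] at hxy ⊢
    rcases hxy.of_sup_edge with h' | h' | h'
    · exact .inl h'
    · exact .inr (.inl ⟨h'.1, h'.2.symm⟩)
    · exact .inr (.inr ⟨h'.1, h'.2.symm⟩)
  have hcu : cu ≠ cv := fun h' => h (ConnectedComponent.exact h')
  have huv : u ≠ v := by rintro rfl; exact h .rfl
  have hφuv : φ cu = φ cv := ConnectedComponent.sound <| Adj.reachable <|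
    (sup_adj ..).mpr (.inr ((edge_adj ..).mpr ⟨.inl ⟨rfl, rfl⟩, huv⟩))
  have hinj : Set.InjOn φ {cv}ᶜ := fun x hx y hy hxy => by
    rcases hφ x y hxy with h' | h' | h'
    exacts [h', absurd h'.2 hy, absurd h'.1 hx]
  have himage : φ '' {cv}ᶜ = Set.univ := by
    refine Set.eq_univ_of_forall fun z => ?_
    obtain ⟨w, rfl⟩ := ConnectedComponent.surjective_map_ofLE le_sup_left z
    by_cases hw : w = cv
    · exact ⟨cu, hcu, hw ▸ hφuv⟩
    · exact ⟨w, hw, rfl⟩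
  rw [← Set.ncard_univ, ← himage, hinj.ncard_image, ← Set.ncard_singleton cv,
    Set.ncard_compl_add_ncard]

lemma card_connectedComponent_le_sup_edge_add_one (G : SimpleGraph V) (u v : V) :
    Nat.card G.ConnectedComponent ≤ Nat.card (G ⊔ edge u v).ConnectedComponent + 1 := by
  by_cases h : G.Reachable u v
  · rw [card_connectedComponent_sup_edge_of_reachable h]; omega
  · rw [card_connectedComponent_sup_edge_add_one h]

lemma card_connectedComponent_sup_edge_add_le (hGH : G ≤ H) (u v : V) :
    Nat.card (G ⊔ edge u v).ConnectedComponent + Nat.card H.ConnectedComponent ≤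
      Nat.card G.ConnectedComponent + Nat.card (H ⊔ edge u v).ConnectedComponent := by
  by_cases h : G.Reachable u v
  · rw [card_connectedComponent_sup_edge_of_reachable h,
      card_connectedComponent_sup_edge_of_reachable (h.mono hGH)]
  · have := card_connectedComponent_le_sup_edge_add_one H u v
    rw [← card_connectedComponent_sup_edge_add_one h] at *
    omega

lemma card_connectedComponent_sup_fromEdgeSet_add_le (hGH : G ≤ H) (s : Set (Sym2 V)) :
    Nat.card (G ⊔ fromEdgeSet s).ConnectedComponent + Nat.card H.ConnectedComponent ≤
      Nat.card G.ConnectedComponent + Nat.card (H ⊔ fromEdgeSet s).ConnectedComponent := by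
  induction s, s.toFinite using Set.Finite.induction_on with
  | empty => simp
  | @insert z s _ _ ih =>
    induction z using Sym2.ind with | _ u v =>
    have := card_connectedComponent_sup_edge_add_le
      (sup_le_sup_right hGH (fromEdgeSet s)) u v
    rw [Set.insert_eq, fromEdgeSet_union, ← edge, sup_comm (edge u v), ← sup_assoc, ← sup_assoc]
    omega

theorem card_connectedComponent_add_card_connectedComponent_le (G H : SimpleGraph V) :
    Nat.card G.ConnectedComponent + Nat.card H.ConnectedComponent ≤
      Nat.card (G ⊓ H).ConnectedComponent + Nat.card (G ⊔ H).ConnectedComponent := by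
  have := card_connectedComponent_sup_fromEdgeSet_add_le (inf_le_right : G ⊓ H ≤ H) G.edgeSet
  rwa [fromEdgeSet_edgeSet, sup_eq_right.mpr inf_le_left, sup_comm H] at this

end Finite

variable [Fintype V]

lemma card_image_le_card_connectedComponent {β : Type*} [DecidableEq β] {f : V → β}
    (hf : ∀ a b, G.Adj a b → f a = f b) : #(univ.image f) ≤ Nat.card G.ConnectedComponent := by
  classical
  let g : G.ConnectedComponent → β := Quot.lift f fun _ _ h => h.eq_of_forall_adj hf
  calc #(univ.image f) = #((univ.image G.connectedComponentMk).image g) := by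
        rw [image_image]; rfl
    _ ≤ #(univ.image G.connectedComponentMk) := card_image_le
    _ ≤ Fintype.card G.ConnectedComponent := card_le_univ _
    _ = Nat.card G.ConnectedComponent := Nat.card_eq_fintype_card.symm

lemma card_connectedComponent_le_card_parts [DecidableEq V]
    [DecidableRel G.reachableSetoid] :
    Nat.card G.ConnectedComponent ≤ #(Finpartition.ofSetoid G.reachableSetoid).parts := by
  set P := Finpartition.ofSetoid G.reachableSetoid
  have hpart {a b : V} : b ∈ P.part a ↔ G.Reachable a b := Finpartition.mem_part_ofSetoid_iff_rel
  let g : G.ConnectedComponent → P.parts := Quot.lift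
    (fun a => ⟨P.part a, P.part_mem.mpr (mem_univ a)⟩)
    fun a b h => Subtype.ext (P.part_eq_of_mem (P.part_mem.mpr (mem_univ _)) (hpart.mpr h.symm))
  have hg : Injective g := by
    intro x y hxy
    induction x using ConnectedComponent.ind with | h a =>
    induction y using ConnectedComponent.ind with | h b =>
    have hab : P.part a = P.part b := congrArg Subtype.val hxy
    exact ConnectedComponent.sound (hpart.mp (hab ▸ P.mem_part (mem_univ b)))
  simpa using Nat.card_le_card_of_injective g hg

lemma card_le_card_connectedComponent_of_forall_adj [DecidableEq V]
    {P : Finset (Finset V)} (hP : ∀ v, ∃! W, W ∈ P ∧ v ∈ W) (hne : ∀ W ∈ P, W.Nonempty)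
    (hG : ∀ a b, G.Adj a b → ∃ W ∈ P, a ∈ W ∧ b ∈ W) :
    #P ≤ Nat.card G.ConnectedComponent := by
  choose blk hblk hblk_unique using hP
  have himage : univ.image blk = P := by
    ext W
    refine ⟨fun hW => ?_, fun hW => ?_⟩
    · obtain ⟨v, -, rfl⟩ := mem_image.mp hW
      exact (hblk v).1
    · obtain ⟨w, hw⟩ := hne W hW
      exact mem_image.mpr ⟨w, mem_univ w, (hblk_unique w W ⟨hW, hw⟩).symm⟩
  rw [← himage]
  refine card_image_le_card_connectedComponent fun a b hab => ?_
  obtain ⟨W, hW, ha, hb⟩ := hG a b hab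
  rw [← hblk_unique a W ⟨hW, ha⟩, ← hblk_unique b W ⟨hW, hb⟩]

end SimpleGraph

section Multigraph

open SimpleGraph

variable {V E : Type*} (ends : E → Sym2 V)

noncomputable def graphicRank (A : Finset E) : ℕ :=
  Nat.card V - Nat.card (fromEdgeSet (ends '' A)).ConnectedComponent

lemma reachable_fromEdgeSet_image_of_mem {A : Finset E} {e : E} (he : e ∈ A) {u v : V} (huv : ends e = s(u, v)) :
    (fromEdgeSet (ends '' A)).Reachable u v := by
  rcases eq_or_ne u v with rfl | hne
  · rfl
  · exact Adj.reachable ((fromEdgeSet_adj _).mpr ⟨⟨e, he, huv⟩, hne⟩)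

lemma fromEdgeSet_image_insert [DecidableEq E] (A : Finset E) {e : E} {u v : V}
    (he : ends e = s(u, v)) :
    fromEdgeSet (ends '' ↑(insert e A)) = fromEdgeSet (ends '' A) ⊔ edge u v := by
  rw [coe_insert, Set.image_insert_eq, he, Set.insert_eq, fromEdgeSet_union, sup_comm]
  rfl

section Finite

variable [Finite V]

lemma graphicRank_add_card_connectedComponent (A : Finset E) :
    graphicRank ends A + Nat.card (fromEdgeSet (ends '' A)).ConnectedComponent = Nat.card V :=
  Nat.sub_add_cancel card_connectedComponent_le_card

lemma graphicRank_le_card (A : Finset E) : graphicRank ends A ≤ #A := by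
  classical
  induction A using Finset.induction_on with
  | empty => simp [graphicRank, card_connectedComponent_bot]
  | @insert e A he ih =>
    obtain ⟨⟨u, v⟩, huv⟩ := Sym2.mk_surjective (ends e)
    have := card_connectedComponent_le_sup_edge_add_one (fromEdgeSet (ends '' A)) u v
    have := graphicRank_add_card_connectedComponent ends A
    have := graphicRank_add_card_connectedComponent ends (insert e A)
    rw [fromEdgeSet_image_insert ends A (u := u) (v := v) huv.symm] at this
    rw [card_insert_of_notMem he]
    omega

lemma graphicRank_mono : Monotone (graphicRank ends) := fun _ _ h =>
  Nat.sub_le_sub_left (ConnectedComponent.card_le_card_of_le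
    (fromEdgeSet_mono (Set.image_mono (coe_subset.mpr h)))) _

lemma graphicRank_union_add_inter_le [DecidableEq E] (X Y : Finset E) :
    graphicRank ends (X ∪ Y) + graphicRank ends (X ∩ Y) ≤
      graphicRank ends X + graphicRank ends Y := by
  have hunion : fromEdgeSet (ends '' ↑(X ∪ Y)) =
      fromEdgeSet (ends '' X) ⊔ fromEdgeSet (ends '' Y) := by
    rw [coe_union, Set.image_union, fromEdgeSet_union]
  have hinter : fromEdgeSet (ends '' ↑(X ∩ Y)) ≤
      fromEdgeSet (ends '' X) ⊓ fromEdgeSet (ends '' Y) := by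
    rw [← fromEdgeSet_inter]
    exact fromEdgeSet_mono (coe_inter X Y ▸ Set.image_inter_subset _ _ _)
  have := card_connectedComponent_add_card_connectedComponent_le
    (fromEdgeSet (ends '' X)) (fromEdgeSet (ends '' Y))
  have := ConnectedComponent.card_le_card_of_le hinter
  have := graphicRank_add_card_connectedComponent ends X
  have := graphicRank_add_card_connectedComponent ends Y
  have := graphicRank_add_card_connectedComponent ends (X ∩ Y)
  have := graphicRank_add_card_connectedComponent ends (X ∪ Y)
  rw [hunion] at this
  omega

lemma le_graphicRank_iff_connected [Nonempty V] (A : Finset E) :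
    Nat.card V - 1 ≤ graphicRank ends A ↔ (fromEdgeSet (ends '' A)).Connected := by
  have := graphicRank_add_card_connectedComponent ends A
  have : 0 < Nat.card (fromEdgeSet (ends '' A)).ConnectedComponent := Nat.card_pos
  rw [← card_connectedComponent_eq_one_iff]
  omega

end Finite

variable [Fintype V] [DecidableEq V]

lemma card_sub_one_le_card_crossing {T : Finset E}
    (hT : (fromEdgeSet (ends '' T)).Connected) {P : Finset (Finset V)}
    (hP : ∀ v, ∃! W, W ∈ P ∧ v ∈ W) (hne : ∀ W ∈ P, W.Nonempty) :
    #P - 1 ≤ #(T.filter fun e => ∀ W ∈ P, ¬ ∀ v ∈ ends e, v ∈ W) := by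
  classical
  have : Nonempty V := hT.nonempty
  set X := T.filter fun e => ∀ W ∈ P, ¬ ∀ v ∈ ends e, v ∈ W
  have hinside : #P ≤ Nat.card (fromEdgeSet (ends '' ↑(T \ X))).ConnectedComponent := by
    refine card_le_card_connectedComponent_of_forall_adj hP hne fun a b hab => ?_
    obtain ⟨⟨e, he, hends⟩, -⟩ := (fromEdgeSet_adj _).mp hab
    obtain ⟨heT, heX⟩ := mem_sdiff.mp he
    obtain ⟨W, hW, hsub⟩ : ∃ W ∈ P, ∀ v ∈ ends e, v ∈ W := by
      by_contra h
      exact heX (mem_filter.mpr ⟨heT, fun W hW hWe => h ⟨W, hW, hWe⟩⟩)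
    exact ⟨W, hW, hsub a (hends ▸ Sym2.mem_mk_left a b), hsub b (hends ▸ Sym2.mem_mk_right a b)⟩
  have hsplit : graphicRank ends T ≤ graphicRank ends (T \ X) + #X :=
    calc graphicRank ends T = graphicRank ends ((T \ X) ∪ X) := by
          rw [sdiff_union_of_subset (filter_subset _ _)]
      _ ≤ graphicRank ends (T \ X) + graphicRank ends X :=
          (Nat.le_add_right _ _).trans (graphicRank_union_add_inter_le ends _ _)
      _ ≤ graphicRank ends (T \ X) + #X := Nat.add_le_add_left (graphicRank_le_card ends X) _
  have := (le_graphicRank_iff_connected ends T).mpr hT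
  have := graphicRank_add_card_connectedComponent ends (T \ X)
  omega

lemma radoCondition_colorClasses [Fintype E] [DecidableEq E] {κ : Type*} [Fintype κ]
    [DecidableEq κ] (c : E → κ) (hκ : Fintype.card κ < Nat.card V)
    (h : ∀ P : Finset (Finset V), (∀ v : V, ∃! W, W ∈ P ∧ v ∈ W) → (∀ W ∈ P, W.Nonempty) →
      #P - 1 ≤ #((univ.filter fun e => ∀ W ∈ P, ¬ ∀ v ∈ ends e, v ∈ W).image c)) :
    RadoCondition (graphicRank ends) fun i => univ.filter (c · = i) := by
  classical
  intro K
  set A := K.biUnion fun i => univ.filter (c · = i)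
  set P := Finpartition.ofSetoid (fromEdgeSet (ends '' A)).reachableSetoid
  have hcross : (univ.filter fun e => ∀ W ∈ P.parts, ¬ ∀ v ∈ ends e, v ∈ W).image c ⊆ Kᶜ := by
    intro i hi
    obtain ⟨e, he, rfl⟩ := mem_image.mp hi
    refine mem_compl.mpr fun hK => ?_
    obtain ⟨⟨u, v⟩, huv⟩ := Sym2.mk_surjective (ends e)
    refine (mem_filter.mp he).2 (P.part u) (P.part_mem.mpr (mem_univ u)) fun w hw => ?_
    rw [Finpartition.mem_part_ofSetoid_iff_rel]
    rcases Sym2.mem_iff.mp (huv ▸ hw) with rfl | rfl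
    · exact .rfl
    · exact reachable_fromEdgeSet_image_of_mem ends (by simpa [A] using hK) huv.symm
  have := h P.parts (fun v => P.existsUnique_mem (mem_univ v)) fun W => P.nonempty_of_mem_parts
  have hcolors := card_le_card hcross
  rw [card_compl] at hcolors
  have := card_le_univ K
  have : Nat.card (fromEdgeSet (ends '' A)).ConnectedComponent ≤ #P.parts :=
    card_connectedComponent_le_card_parts
  have := graphicRank_add_card_connectedComponent ends A
  omega

end Multigraph

/-- A multigraph on vertex set `V` is given by an edge index type `E` together with
an endpoints map `ends : E → Sym2 V`; `c` colors the edges with `n - 1` colors.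
The graph has a rainbow spanning tree iff every partition of `V` into `k` nonempty
classes is crossed by edges of at least `k - 1` distinct colors. -/
theorem stmt_18 {V E : Type*} [Fintype V] [Fintype E] [DecidableEq V]
    (n : ℕ) (hn : 1 ≤ n) (hV : Fintype.card V = n)
    (ends : E → Sym2 V) (c : E → Fin (n - 1)) :
    (∃ T : Finset E, T.card = n - 1 ∧ Set.InjOn c ↑T ∧
        (SimpleGraph.fromEdgeSet (ends '' ↑T)).Connected)
      ↔
    (∀ P : Finset (Finset V), (∀ v : V, ∃! W, W ∈ P ∧ v ∈ W) → (∀ W ∈ P, W.Nonempty) →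
        P.card - 1 ≤
          ((Finset.univ.filter
            (fun e : E => ∀ W ∈ P, ¬ (∀ v ∈ ends e, v ∈ W))).image c).card) := by
  classical
  rw [← Nat.card_eq_fintype_card] at hV
  constructor
  · rintro ⟨T, -, hTc, hT⟩ P hP hne
    calc #P - 1 ≤ #(T.filter fun e => ∀ W ∈ P, ¬ ∀ v ∈ ends e, v ∈ W) :=
          card_sub_one_le_card_crossing ends hT hP hne
      _ = #((T.filter fun e => ∀ W ∈ P, ¬ ∀ v ∈ ends e, v ∈ W).image c) :=
          (card_image_of_injOn (hTc.mono (filter_subset _ _))).symm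
      _ ≤ _ := card_le_card (image_subset_image (filter_subset_filter _ (subset_univ T)))
  · intro h
    have : Nonempty V := (Nat.card_pos_iff.mp (by omega)).1
    have hrado := radoCondition_colorClasses ends c (by rw [Fintype.card_fin, hV]; omega) h
    obtain ⟨f, hf, hfc, hrank⟩ := hrado.exists_transversal (graphicRank_le_card ends)
      (graphicRank_mono ends) (graphicRank_union_add_inter_le ends)
    have hcf (i) : c (f i) = i := by simpa using hfc i
    refine ⟨univ.image f, by simp [card_image_of_injective _ hf], ?_, ?_⟩
    · intro a ha b hb hab
      obtain ⟨i, -, rfl⟩ := mem_image.mp ha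
      obtain ⟨j, -, rfl⟩ := mem_image.mp hb
      rw [hcf, hcf] at hab
      rw [hab]
    · rw [← le_graphicRank_iff_connected, hV]
      simpa only [Fintype.card_fin] using hrank
end

section
/- For all reals s' ≥ 1, ε ∈ (0, 1/10), δ ∈ (4ε, 1/2), and n sufficiently large (depending on δ, ε), with b ≤ (1−δ)s'n/log(n) and k = n/log(n): (1−4ε)s'n − b(log(k)+1) − k·s' − 2b(log(2n) − log(k)) > 0. -/
theorem stmt_19 (ε δ : ℝ) (hε0 : 0 < ε) (hε : ε < 1 / 10)
    (hδ1 : 4 * ε < δ) (hδ2 : δ < 1 / 2) :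
    ∃ N : ℕ, ∀ n : ℕ, N ≤ n → ∀ s' b : ℝ, 1 ≤ s' →
      b ≤ (1 - δ) * s' * n / Real.log n →
      0 < (1 - 4 * ε) * s' * n
            - b * (Real.log ((n : ℝ) / Real.log n) + 1)
            - ((n : ℝ) / Real.log n) * s'
            - 2 * b * (Real.log (2 * n) - Real.log ((n : ℝ) / Real.log n)) := by
  set c := δ - 4 * ε with hcdef
  have hc0 : 0 < c := by simp only [hcdef]; linarith
  have hc1 : c < 1 := by simp only [hcdef]; linarith
  obtain ⟨N, hN⟩ := (Filter.eventually_atTop).1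
    ((Real.tendsto_log_atTop.comp tendsto_natCast_atTop_atTop).eventually_ge_atTop
      (max 1 (25 / c ^ 2)))
  refine ⟨max N 1, fun n hn s' b hs' hb => ?_⟩
  have hn' : N ≤ n := le_trans (le_max_left _ _) hn
  have hL := hN n hn'
  simp only [Function.comp] at hL
  have hn1 : (1 : ℕ) ≤ n := le_trans (le_max_right _ _) hn
  have hnpos : (0 : ℝ) < n := by exact_mod_cast Nat.lt_of_lt_of_le Nat.zero_lt_one hn1
  set L := Real.log (n : ℝ) with hLdef
  have hL1 : 1 ≤ L := le_trans (le_max_left _ _) hL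
  have hL2 : 25 / c ^ 2 ≤ L := le_trans (le_max_right _ _) hL
  have hLpos : 0 < L := by linarith
  set lL := Real.log L with hlLdef
  have hlL0 : 0 ≤ lL := Real.log_nonneg hL1
  have hlog2pos : (0 : ℝ) < Real.log 2 := Real.log_pos (by norm_num)
  have hlog2lt : Real.log 2 < 1 := by
    have := Real.log_two_lt_d9
    linarith
  -- log of k = n / L
  have hk : Real.log ((n : ℝ) / L) = L - lL := by
    rw [Real.log_div (ne_of_gt hnpos) (ne_of_gt hLpos)]
  have h2n : Real.log (2 * (n : ℝ)) = Real.log 2 + L :=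
    Real.log_mul two_ne_zero (ne_of_gt hnpos)
  -- key : c * L > lL + 2 * log 2 + 2
  have hsqrt : 5 / c ≤ Real.sqrt L := by
    have h25 : (5 / c) ^ 2 ≤ L := by
      rw [div_pow]; norm_num; linarith
    nlinarith [Real.sq_sqrt hLpos.le, Real.sqrt_nonneg L, div_pos (by norm_num : (0:ℝ) < 5) hc0]
  have hlLsqrt : lL ≤ 2 * Real.sqrt L - 2 := by
    have h1 : Real.log (Real.sqrt L) ≤ Real.sqrt L - 1 :=
      Real.log_le_sub_one_of_pos (Real.sqrt_pos.mpr hLpos)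
    have h2 : Real.log (Real.sqrt L) = lL / 2 := by
      rw [hlLdef, Real.log_sqrt hLpos.le]
    linarith
  have key : lL + 2 * Real.log 2 + 2 < c * L := by
    have hs := Real.sq_sqrt hLpos.le
    set s := Real.sqrt L with hsdef
    have hs5 : 5 / c ≤ s := hsqrt
    have hs0 : 0 < s := lt_of_lt_of_le (div_pos (by norm_num) hc0) hs5
    have hcs : 5 ≤ c * s := by
      rw [div_le_iff₀ hc0] at hs5; linarith [hs5]
    nlinarith [mul_le_mul_of_nonneg_left hs5 hc0.le, hcs, hs0, hc0, hc1]
  -- multiply hb by L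
  have hb' : b * L ≤ (1 - δ) * s' * n := (le_div_iff₀ hLpos).mp hb
  have hcoef1 : 0 ≤ L - lL + 1 := by
    have : lL ≤ L - 1 := Real.log_le_sub_one_of_pos hLpos
    linarith
  have hcoef2 : 0 ≤ 2 * (Real.log 2 + lL) := by positivity
  have h1 : b * L * (L - lL + 1) ≤ (1 - δ) * s' * n * (L - lL + 1) :=
    mul_le_mul_of_nonneg_right hb' hcoef1
  have h2 : b * L * (2 * (Real.log 2 + lL)) ≤ (1 - δ) * s' * n * (2 * (Real.log 2 + lL)) :=
    mul_le_mul_of_nonneg_right hb' hcoef2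
  have hsn : (0 : ℝ) < s' * n := by positivity
  have hsn1 : (1 : ℝ) * n ≤ s' * n := mul_le_mul_of_nonneg_right hs' hnpos.le
  have h4' : (1 - δ) * (L + lL + 2 * Real.log 2 + 1) + 1 < (1 - 4 * ε) * L := by
    have hδ0 : 0 < δ := by linarith
    have hmono : (1 - δ) * (lL + 2 * Real.log 2 + 1) ≤ 1 * (lL + 2 * Real.log 2 + 1) :=
      mul_le_mul_of_nonneg_right (by linarith) (by positivity)
    have key' : lL + 2 * Real.log 2 + 2 < δ * L - 4 * (ε * L) := by
      have hcL : c * L = δ * L - 4 * (ε * L) := by rw [hcdef]; ring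
      linarith [key, hcL.symm.le, hcL.le]
    linarith [key', hmono]
  have h4 : (1 - δ) * s' * n * (L - lL + 1) + (1 - δ) * s' * n * (2 * (Real.log 2 + lL))
      + s' * n < (1 - 4 * ε) * s' * n * L := by
    have := mul_lt_mul_of_pos_left h4' hsn
    linarith [this]
  rw [hk, h2n]
  set E := (1 - 4 * ε) * s' * n - b * (L - lL + 1) - ((n : ℝ) / L) * s'
      - 2 * b * (Real.log 2 + L - (L - lL)) with hEdef
  have hEL : E * L = (1 - 4 * ε) * s' * n * L - b * L * (L - lL + 1) - s' * n
      - b * L * (2 * (Real.log 2 + lL)) := by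
    rw [hEdef]
    field_simp
    ring
  have h5 : 0 < E * L := by rw [hEL]; linarith
  by_contra h
  push_neg at h
  linarith [h5, mul_nonpos_of_nonpos_of_nonneg h hLpos.le]
end
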